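/- arXiv:0711.3149 — 4 statements merged into one kernel-verified Lean document; each statement's English description precedes it below -/
import Mathlib

section
/- Let G=(V,E) be a graph, a,b non-adjacent vertices, and for each i,j ∈ V∖{a,b} non-adjacent, let α_{ij} be the maximum number of internally vertex-disjoint i–j paths. Then for every ab-separator {A,B,C}, the incidence vector satisfies Σ_{k∈V∖{a,b}} (x_{ka} + x_{kb}) − α_{ij}·(2 − x_{ia} − x_{jb}) ≤ n − α_{ij}, where n = |V|. -/
private lemma walk_hits {V : Type*} [DecidableEq V] (G : SimpleGraph V)
    (A B C : Finset V) (hAB : Disjoint A B)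
    (hcover : ∀ v : V, v ∈ A ∨ v ∈ B ∨ v ∈ C)
    (hsep : ∀ u ∈ A, ∀ w ∈ B, ¬ G.Adj u w) (j : V) (hj : j ∈ B) :
    ∀ (u : V) (W : G.Walk u j), u ∈ A → ∃ c ∈ C, c ∈ W.support := by
  intro u W
  induction W with
  | nil => intro hu; exact absurd hj (Finset.disjoint_left.mp hAB hu)
  | cons h W ih =>
    rename_i x y z
    intro hu
    rcases hcover y with hv | hv | hv
    · obtain ⟨c, hc, hcs⟩ := ih hj hv
      exact ⟨c, hc, by simp [hcs]⟩
    · exact absurd h (hsep x hu y hv)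
    · exact ⟨y, hv, by simp⟩

theorem stmt4 {V : Type*} [Fintype V] [DecidableEq V]
    (G : SimpleGraph V)
    (a b : V) (hab : ¬ G.Adj a b)
    (i j : V) (hia : i ≠ a) (hib : i ≠ b) (hja : j ≠ a) (hjb : j ≠ b)
    (hij : i ≠ j) (hijadj : ¬ G.Adj i j)
    (α : ℕ)
    (hα : α = sSup {k : ℕ | ∃ P : Fin k → G.Walk i j,
      (∀ m, (P m).IsPath) ∧
      ∀ m m', m ≠ m' → ∀ v, v ∈ (P m).support → v ∈ (P m').support →
        v = i ∨ v = j})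
    (A B C : Finset V)
    (hAB : Disjoint A B) (hAC : Disjoint A C) (hBC : Disjoint B C)
    (hcover : A ∪ B ∪ C = Finset.univ)
    (ha : a ∈ A) (hb : b ∈ B)
    (hsep : ∀ u ∈ A, ∀ w ∈ B, ¬ G.Adj u w) :
    (∑ k ∈ Finset.univ \ {a, b},
        ((if k ∈ A then (1 : ℤ) else 0) + (if k ∈ B then (1 : ℤ) else 0)))
      - (α : ℤ) * (2 - (if i ∈ A then (1 : ℤ) else 0) - (if j ∈ B then (1 : ℤ) else 0))
      ≤ (Fintype.card V : ℤ) - α := by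
  have hcov : ∀ v : V, v ∈ A ∨ v ∈ B ∨ v ∈ C := by
    intro v
    have : v ∈ A ∪ B ∪ C := hcover ▸ Finset.mem_univ v
    simpa [Finset.mem_union, or_assoc] using this
  set s : Finset V := Finset.univ \ {a, b} with hs
  have hane : a ≠ b := fun h => Finset.disjoint_left.mp hAB ha (h ▸ hb)
  have hscard : (s.card : ℤ) = (Fintype.card V : ℤ) - 2 := by
    have h2 : ({a, b} : Finset V).card = 2 := by
      rw [Finset.card_insert_of_notMem (by simpa using hane), Finset.card_singleton]
    have hsub : ({a, b} : Finset V) ⊆ Finset.univ := Finset.subset_univ _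
    rw [hs, Finset.card_sdiff_of_subset hsub, h2, Finset.card_univ]
    have : 2 ≤ Fintype.card V := by
      rw [← h2]; exact Finset.card_le_card hsub
    push_cast [Nat.cast_sub this]; ring
  by_cases hcase : i ∈ A ∧ j ∈ B
  · -- multiplier is 0, need α ≤ |C| and sum = n - 2 - |C|
    obtain ⟨hiA, hjB⟩ := hcase
    have hαC : α ≤ C.card := by
      rw [hα]
      apply csSup_le'
      rintro k ⟨P, hpath, hdisj⟩
      -- pick a vertex of C on each path
      have hex : ∀ m : Fin k, ∃ c ∈ C, c ∈ (P m).support :=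
        fun m => walk_hits G A B C hAB hcov hsep j hjB i (P m) hiA
      choose g hgC hgs using hex
      have : (Finset.univ : Finset (Fin k)).card ≤ C.card := by
        apply Finset.card_le_card_of_injOn g (fun m _ => hgC m)
        intro m _ m' _ hg
        by_contra hne
        rcases hdisj m m' hne (g m) (hgs m) (hg ▸ hgs m') with h | h
        · exact Finset.disjoint_left.mp hAC hiA (h ▸ hgC m)
        · exact Finset.disjoint_left.mp hBC hjB (h ▸ hgC m)
      simpa using this
    have hsum : (∑ k ∈ s, ((if k ∈ A then (1 : ℤ) else 0) + (if k ∈ B then (1 : ℤ) else 0)))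
        ≤ (s.card : ℤ) - C.card := by
      have hCs : C ⊆ s := by
        intro c hc
        simp only [hs, Finset.mem_sdiff, Finset.mem_univ, true_and, Finset.mem_insert,
          Finset.mem_singleton]
        push_neg
        constructor
        · rintro rfl; exact Finset.disjoint_left.mp hAC ha hc
        · rintro rfl; exact Finset.disjoint_left.mp hBC hb hc
      have step : ∀ k ∈ s, ((if k ∈ A then (1 : ℤ) else 0) + (if k ∈ B then (1 : ℤ) else 0))
          ≤ 1 - (if k ∈ C then (1 : ℤ) else 0) := by
        intro k _
        rcases hcov k with hk | hk | hk
        · have h1 : k ∉ B := Finset.disjoint_left.mp hAB hk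
          have h2 : k ∉ C := Finset.disjoint_left.mp hAC hk
          simp [hk, h1, h2]
        · have h1 : k ∉ A := fun h => Finset.disjoint_left.mp hAB h hk
          have h2 : k ∉ C := Finset.disjoint_left.mp hBC hk
          simp [hk, h1, h2]
        · have h1 : k ∉ A := fun h => Finset.disjoint_left.mp hAC h hk
          have h2 : k ∉ B := fun h => Finset.disjoint_left.mp hBC h hk
          simp [hk, h1, h2]
      calc (∑ k ∈ s, ((if k ∈ A then (1 : ℤ) else 0) + (if k ∈ B then (1 : ℤ) else 0)))
          ≤ ∑ k ∈ s, (1 - (if k ∈ C then (1 : ℤ) else 0)) := Finset.sum_le_sum step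
        _ = (s.card : ℤ) - (s.filter (· ∈ C)).card := by
            rw [Finset.sum_sub_distrib, Finset.sum_const, Finset.sum_boole]
            simp
        _ = (s.card : ℤ) - C.card := by
            have : s.filter (· ∈ C) = C := by
              ext c
              simp only [Finset.mem_filter]
              exact ⟨fun h => h.2, fun h => ⟨hCs h, h⟩⟩
            rw [this]
    simp only [hiA, hjB, if_pos]
    have : (α : ℤ) ≤ C.card := by exact_mod_cast hαC
    linarith [hsum, hscard]
  · -- multiplier ≥ 1
    have hsum : (∑ k ∈ s, ((if k ∈ A then (1 : ℤ) else 0) + (if k ∈ B then (1 : ℤ) else 0)))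
        ≤ (s.card : ℤ) := by
      calc (∑ k ∈ s, ((if k ∈ A then (1 : ℤ) else 0) + (if k ∈ B then (1 : ℤ) else 0)))
          ≤ ∑ k ∈ s, (1 : ℤ) := by
            apply Finset.sum_le_sum
            intro k _
            rcases hcov k with hk | hk | hk
            · have h1 : k ∉ B := Finset.disjoint_left.mp hAB hk
              simp [hk, h1]
            · have h1 : k ∉ A := fun h => Finset.disjoint_left.mp hAB h hk
              simp [hk, h1]
            · have h1 : k ∉ A := fun h => Finset.disjoint_left.mp hAC h hk
              have h2 : k ∉ B := fun h => Finset.disjoint_left.mp hBC h hk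
              simp [h1, h2]
        _ = (s.card : ℤ) := by simp
    have ht : (1 : ℤ) ≤ 2 - (if i ∈ A then (1 : ℤ) else 0) - (if j ∈ B then (1 : ℤ) else 0) := by
      rcases not_and_or.mp hcase with h | h <;> simp [h] <;> split <;> norm_num
    nlinarith [hsum, hscard, Nat.cast_nonneg (α := ℤ) α]
end

section
/- Let G=(V,E) be a graph, a,b non-adjacent, β an integer bound, and V' ⊆ V∖{a,b} such that the induced subgraph G[V'] is connected and |V'| > β. Let α₀ be the minimum over non-adjacent pairs i,j ∈ V' of the maximum number of internally vertex-disjoint i–j paths within G[V'] (set α₀ = |V'| if V' is a clique). Then every ab-separator {A,B,C} with max{|A|,|B|} ≤ β satisfies Σ_{i∈V'} (x_{ia}+x_{ib}) ≤ |V'| − min{α₀, |V'| − β}. -/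
lemma walk_hits_C {V : Type*} [Fintype V] [DecidableEq V] {G : SimpleGraph V}
    {A B C : Finset V} (hcover : A ∪ B ∪ C = Finset.univ)
    (hsep : ∀ u ∈ A, ∀ w ∈ B, ¬ G.Adj u w)
    (hAB : Disjoint A B) :
    ∀ {i j : V} (p : G.Walk i j), i ∈ A → j ∈ B → ∃ v ∈ p.support, v ∈ C := by
  intro i j p
  induction p with
  | nil =>
    intro hi hj
    exact absurd hj (Finset.disjoint_left.mp hAB hi)
  | @cons i u j h p ih =>
    intro hi hj
    have hu : u ∈ A ∪ B ∪ C := by rw [hcover]; exact Finset.mem_univ u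
    rcases Finset.mem_union.mp hu with hu | hu
    · rcases Finset.mem_union.mp hu with hu | hu
      · obtain ⟨v, hv, hvC⟩ := ih hu hj
        exact ⟨v, by simp [hv], hvC⟩
      · exact absurd h (hsep _ hi _ hu)
    · exact ⟨u, by simp, hu⟩

theorem stmt5 {V : Type*} [Fintype V] [DecidableEq V]
    (G : SimpleGraph V) [DecidableRel G.Adj]
    (a b : V) (hab : ¬ G.Adj a b)
    (β : ℕ)
    (V' : Finset V) (hV' : ∀ v ∈ V', v ≠ a ∧ v ≠ b)
    (hconn' : (G.induce (V' : Set V)).Connected)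
    (hbig : β < V'.card)
    (α0 : ℕ)
    (hα0 : α0 = if ∀ i ∈ V', ∀ j ∈ V', i ≠ j → G.Adj i j then V'.card
      else sInf {m : ℕ | ∃ i ∈ V', ∃ j ∈ V', i ≠ j ∧ ¬ G.Adj i j ∧
        m = sSup {k : ℕ | ∃ P : Fin k → G.Walk i j,
          (∀ t, (P t).IsPath) ∧
          (∀ t, ∀ v ∈ (P t).support, v ∈ V') ∧
          ∀ t t', t ≠ t' → ∀ v, v ∈ (P t).support → v ∈ (P t').support →
            v = i ∨ v = j}})
    (A B C : Finset V)
    (hAB : Disjoint A B) (hAC : Disjoint A C) (hBC : Disjoint B C)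
    (hcover : A ∪ B ∪ C = Finset.univ)
    (ha : a ∈ A) (hb : b ∈ B)
    (hsep : ∀ u ∈ A, ∀ w ∈ B, ¬ G.Adj u w)
    (hAcard : A.card ≤ β) (hBcard : B.card ≤ β) :
    ∑ i ∈ V', ((if i ∈ A then (1 : ℤ) else 0) + (if i ∈ B then (1 : ℤ) else 0))
      ≤ (V'.card : ℤ) - (min α0 (V'.card - β) : ℕ) := by
  classical
  set cA := V'.filter (· ∈ A) with hcA
  set cB := V'.filter (· ∈ B) with hcB
  set cC := V'.filter (· ∈ C) with hcC
  clear_value cA cB cC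
  have hsumeq : ∑ i ∈ V', ((if i ∈ A then (1 : ℤ) else 0) + (if i ∈ B then (1 : ℤ) else 0))
      = (cA.card : ℤ) + cB.card := by
    rw [hcA, hcB, Finset.sum_add_distrib, Finset.sum_boole, Finset.sum_boole]
  have hsum : cA.card + cB.card + cC.card = V'.card := by
    have : ∀ i ∈ V', ((if i ∈ A then 1 else 0) + (if i ∈ B then 1 else 0)
        + (if i ∈ C then 1 else 0) : ℕ) = 1 := by
      intro i _
      have hi : i ∈ A ∪ B ∪ C := by rw [hcover]; exact Finset.mem_univ i
      simp only [Finset.mem_union] at hi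
      have h1 := Finset.disjoint_left.mp hAB
      have h2 := Finset.disjoint_left.mp hAC
      have h3 := Finset.disjoint_left.mp hBC
      rcases hi with (hA | hB) | hC
      · simp [hA, h1 hA, h2 hA]
      · have hnA : i ∉ A := fun h => h1 h hB
        simp [hB, hnA, h3 hB]
      · have hnA : i ∉ A := fun h => h2 h hC
        have hnB : i ∉ B := fun h => h3 h hC
        simp [hC, hnA, hnB]
    calc cA.card + cB.card + cC.card
        = ∑ i ∈ V', ((if i ∈ A then 1 else 0) + (if i ∈ B then 1 else 0)
          + (if i ∈ C then 1 else 0) : ℕ) := by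
          rw [hcA, hcB, hcC]
          simp [Finset.sum_add_distrib, Finset.sum_boole,
            Finset.filter_mem_eq_inter]
      _ = ∑ i ∈ V', 1 := Finset.sum_congr rfl this
      _ = V'.card := by simp
  have hAsub : cA.card ≤ β := le_trans (Finset.card_le_card (by
    rw [hcA]; intro x hx; exact (Finset.mem_filter.mp hx).2)) hAcard
  have hBsub : cB.card ≤ β := le_trans (Finset.card_le_card (by
    rw [hcB]; intro x hx; exact (Finset.mem_filter.mp hx).2)) hBcard
  have hle : min α0 (V'.card - β) ≤ cC.card := by
    by_cases hA0 : cA.Nonempty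
    · by_cases hB0 : cB.Nonempty
      · obtain ⟨i, hiM⟩ := hA0
        obtain ⟨j, hjM⟩ := hB0
        rw [hcA] at hiM
        rw [hcB] at hjM
        obtain ⟨hiV, hiA⟩ := Finset.mem_filter.mp hiM
        obtain ⟨hjV, hjB⟩ := Finset.mem_filter.mp hjM
        have hij : i ≠ j := fun h => Finset.disjoint_left.mp hAB hiA (h ▸ hjB)
        have hnadj : ¬ G.Adj i j := hsep i hiA j hjB
        have hcf : ¬ (∀ i ∈ V', ∀ j ∈ V', i ≠ j → G.Adj i j) :=
          fun h => hnadj (h i hiV j hjV hij)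
        rw [if_neg hcf] at hα0
        set S := {k : ℕ | ∃ P : Fin k → G.Walk i j,
          (∀ t, (P t).IsPath) ∧
          (∀ t, ∀ v ∈ (P t).support, v ∈ V') ∧
          ∀ t t', t ≠ t' → ∀ v, v ∈ (P t).support → v ∈ (P t').support →
            v = i ∨ v = j} with hS
        have h1 : α0 ≤ sSup S := by
          rw [hα0]
          exact Nat.sInf_le ⟨i, hiV, j, hjV, hij, hnadj, rfl⟩
        have h2 : sSup S ≤ cC.card := by
          apply csSup_le'
          rintro k ⟨P, hpath, hsupp, hdisj⟩
        -- each path hits C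
          have hv : ∀ t : Fin k, ∃ v ∈ (P t).support, v ∈ C :=
            fun t => walk_hits_C hcover hsep hAB (P t) hiA hjB
          choose v hv1 hv2 using hv
          have hmap : ∀ t ∈ (Finset.univ : Finset (Fin k)), v t ∈ cC := by
            intro t _
            rw [hcC]
            exact Finset.mem_filter.mpr ⟨hsupp t (v t) (hv1 t), hv2 t⟩
          have hinj : Set.InjOn v (Finset.univ : Finset (Fin k)) := by
            intro t _ t' _ heq
            by_contra hne
            rcases hdisj t t' hne (v t) (hv1 t) (heq ▸ hv1 t') with h | h
            · exact Finset.disjoint_left.mp hAC hiA (h ▸ hv2 t)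
            · exact Finset.disjoint_left.mp hBC hjB (h ▸ hv2 t)
          have := Finset.card_le_card_of_injOn v hmap hinj
          simpa using this
        exact le_trans (min_le_left _ _) (le_trans h1 h2)
      · have : cB.card = 0 := by
          simp [Finset.not_nonempty_iff_eq_empty.mp hB0]
        have := min_le_right α0 (V'.card - β)
        clear hα0
        omega
    · have : cA.card = 0 := by
        simp [Finset.not_nonempty_iff_eq_empty.mp hA0]
      have := min_le_right α0 (V'.card - β)
      clear hα0
      omega
  rw [hsumeq]
  clear hα0
  omega
end

section
/- Let G=(V,E) be a graph, a,b non-adjacent vertices, {A,B,C} an ab-separator, and χ(e)=1 iff e has exactly one endpoint in C. Then for every a–b path Γ_{ab} and every Γ ⊆ Γ_{ab} with |Γ| odd, χ(Γ) − χ(Γ_{ab}∖Γ) ≤ |Γ| − 1. -/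
/-- `chi C e = 1` iff exactly one endpoint of the edge `e` lies in `C`. -/
def chi {V : Type*} [DecidableEq V] (C : Finset V) : Sym2 V → ℤ :=
  Sym2.lift ⟨fun u v => if (u ∈ C ∧ v ∉ C) ∨ (u ∉ C ∧ v ∈ C) then 1 else 0,
    fun u v => by by_cases h1 : u ∈ C <;> by_cases h2 : v ∈ C <;> simp [h1, h2]⟩

lemma chi_nonneg {V : Type*} [DecidableEq V] (C : Finset V) (e : Sym2 V) :
    0 ≤ chi C e := by
  induction e using Sym2.ind with
  | _ u v => simp only [chi, Sym2.lift_mk]; split <;> norm_num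

lemma chi_le_one {V : Type*} [DecidableEq V] (C : Finset V) (e : Sym2 V) :
    chi C e ≤ 1 := by
  induction e using Sym2.ind with
  | _ u v => simp only [chi, Sym2.lift_mk]; split <;> norm_num

lemma even_walk_chi {V : Type*} [DecidableEq V] (C : Finset V) {G : SimpleGraph V}
    {x y : V} (w : G.Walk x y) :
    Even ((w.edges.map (chi C)).sum + (if x ∈ C then (1:ℤ) else 0)
      + (if y ∈ C then (1:ℤ) else 0)) := by
  induction w with
  | nil =>
    simp only [SimpleGraph.Walk.edges_nil, List.map_nil, List.sum_nil, zero_add]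
    split <;> decide
  | cons h q ih =>
    rename_i u v z
    simp only [SimpleGraph.Walk.edges_cons, List.map_cons, List.sum_cons]
    have hc : chi C s(u, v) = if (u ∈ C ∧ v ∉ C) ∨ (u ∉ C ∧ v ∈ C) then 1 else 0 := rfl
    obtain ⟨k, hk⟩ := ih
    by_cases h1 : u ∈ C <;> by_cases h2 : v ∈ C <;>
      simp only [h1, h2, if_true, if_false, hc] at hk ⊢ <;>
      · norm_num at hk ⊢
        first
        | exact ⟨k, by omega⟩
        | exact ⟨k + 1, by omega⟩

theorem stmt12 {V : Type*} [Fintype V] [DecidableEq V]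
    (G : SimpleGraph V)
    (a b : V) (hab : ¬ G.Adj a b)
    (A B C : Finset V)
    (hAB : Disjoint A B) (hAC : Disjoint A C) (hBC : Disjoint B C)
    (hcover : A ∪ B ∪ C = Finset.univ)
    (ha : a ∈ A) (hb : b ∈ B)
    (hsep : ∀ u ∈ A, ∀ w ∈ B, ¬ G.Adj u w)
    (p : G.Walk a b) (hp : p.IsPath)
    (Γ : Finset (Sym2 V)) (hΓ : Γ ⊆ p.edges.toFinset) (hodd : Odd Γ.card) :
    (∑ e ∈ Γ, chi C e) - ∑ e ∈ p.edges.toFinset \ Γ, chi C e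
      ≤ (Γ.card : ℤ) - 1 := by
  have haC : a ∉ C := fun h => (Finset.disjoint_left.mp hAC) ha h
  have hbC : b ∉ C := fun h => (Finset.disjoint_left.mp hBC) hb h
  have heven := even_walk_chi C p
  simp only [haC, hbC, if_false, add_zero] at heven
  have hnodup : p.edges.Nodup := hp.edges_nodup
  have hsum : ∑ e ∈ p.edges.toFinset, chi C e = (p.edges.map (chi C)).sum := by
    rw [List.sum_toFinset _ hnodup]
  have hsplit : ∑ e ∈ p.edges.toFinset, chi C e
      = ∑ e ∈ Γ, chi C e + ∑ e ∈ p.edges.toFinset \ Γ, chi C e := by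
    rw [add_comm, Finset.sum_sdiff hΓ]
  have h1 : ∑ e ∈ Γ, chi C e ≤ (Γ.card : ℤ) := by
    calc ∑ e ∈ Γ, chi C e ≤ ∑ _e ∈ Γ, (1:ℤ) :=
          Finset.sum_le_sum fun e _ => chi_le_one C e
      _ = Γ.card := by simp
  have h2 : 0 ≤ ∑ e ∈ p.edges.toFinset \ Γ, chi C e :=
    Finset.sum_nonneg fun e _ => chi_nonneg C e
  obtain ⟨k, hk⟩ := heven
  obtain ⟨m, hm⟩ := hodd
  have hm' : (Γ.card : ℤ) = 2 * m + 1 := by exact_mod_cast hm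
  rw [← hsum, hsplit] at hk
  omega
end

section
/- Let G=(V,E) be a graph with n vertices, a,b non-adjacent, V(a) and V(b) the neighborhoods of a and b. Then the dimension of the polytope P_{ab} (convex hull of incidence vectors of ab-separators with β(n)=n) equals 2(n−2) − (|V(a)| + |V(b)|). -/
theorem stmt14 {V : Type*} [Fintype V] [DecidableEq V]
    (G : SimpleGraph V) [DecidableRel G.Adj]
    (hn : 3 ≤ Fintype.card V)
    (a b : V) (hne : a ≠ b) (hab : ¬ G.Adj a b)
    (S : Set ({i : V // i ≠ a ∧ i ≠ b} → ℝ × ℝ))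
    (hS : S = {X | ∃ A B C : Finset V,
      Disjoint A B ∧ Disjoint A C ∧ Disjoint B C ∧
      A ∪ B ∪ C = Finset.univ ∧ a ∈ A ∧ b ∈ B ∧
      (∀ u ∈ A, ∀ w ∈ B, ¬ G.Adj u w) ∧
      X = fun i => ((if i.1 ∈ A then 1 else 0 : ℝ), (if i.1 ∈ B then 1 else 0 : ℝ))}) :
    Module.finrank ℝ (affineSpan ℝ (convexHull ℝ S)).direction
      = 2 * (Fintype.card V - 2)
        - ((G.neighborFinset a).card + (G.neighborFinset b).card) := by
  classical
  subst hS
  set S : Set ({i : V // i ≠ a ∧ i ≠ b} → ℝ × ℝ) := {X | ∃ A B C : Finset V,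
      Disjoint A B ∧ Disjoint A C ∧ Disjoint B C ∧
      A ∪ B ∪ C = Finset.univ ∧ a ∈ A ∧ b ∈ B ∧
      (∀ u ∈ A, ∀ w ∈ B, ¬ G.Adj u w) ∧
      X = fun i => ((if i.1 ∈ A then 1 else 0 : ℝ), (if i.1 ∈ B then 1 else 0 : ℝ))}
    with hSdef
  have habs : ¬ G.Adj b a := fun h => hab h.symm
  -- a generic membership producer
  have hmem : ∀ (A B : Finset V), Disjoint A B → a ∈ A → b ∈ B →
      (∀ u ∈ A, ∀ w ∈ B, ¬ G.Adj u w) →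
      (fun i : {i : V // i ≠ a ∧ i ≠ b} =>
        ((if i.1 ∈ A then 1 else 0 : ℝ), (if i.1 ∈ B then 1 else 0 : ℝ))) ∈ S := by
    intro A B hAB ha hb hedge
    refine ⟨A, B, Finset.univ \ (A ∪ B), hAB, ?_, ?_, ?_, ha, hb, hedge, rfl⟩
    · exact Finset.disjoint_sdiff.mono_left Finset.subset_union_left
    · exact Finset.disjoint_sdiff.mono_left Finset.subset_union_right
    · exact Finset.union_sdiff_of_subset (Finset.subset_univ _)
  have h0S : (0 : {i : V // i ≠ a ∧ i ≠ b} → ℝ × ℝ) ∈ S := by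
    have := hmem {a} {b} (Finset.disjoint_singleton.mpr hne) (by simp) (by simp)
      (by intro u hu w hw; simp at hu hw; subst hu; subst hw; exact hab)
    convert this using 1
    funext i
    simp [i.2.1, i.2.2]; rfl
  -- the linear map whose kernel is the span of S
  let φ : ({i : V // i ≠ a ∧ i ≠ b} → ℝ × ℝ) →ₗ[ℝ]
      ({j : V // G.Adj b j} → ℝ) × ({j : V // G.Adj a j} → ℝ) :=
    { toFun := fun x =>
        (fun j => (x ⟨j.1, fun h => habs (h ▸ j.2), fun h => G.irrefl (h ▸ j.2)⟩).1,
         fun j => (x ⟨j.1, fun h => G.irrefl (h ▸ j.2), fun h => hab (h ▸ j.2)⟩).2)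
      map_add' := fun x y => rfl
      map_smul' := fun c x => rfl }
  -- basis-like elements of S
  set E1 : {i : V // i ≠ a ∧ i ≠ b} → ({i : V // i ≠ a ∧ i ≠ b} → ℝ × ℝ) :=
    fun i j => ((if j = i then 1 else 0 : ℝ), 0) with hE1def
  set E2 : {i : V // i ≠ a ∧ i ≠ b} → ({i : V // i ≠ a ∧ i ≠ b} → ℝ × ℝ) :=
    fun i j => (0, (if j = i then 1 else 0 : ℝ)) with hE2def
  have hE1 : ∀ i : {i : V // i ≠ a ∧ i ≠ b}, ¬ G.Adj b i.1 → E1 i ∈ S := by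
    intro i hi
    have := hmem {a, i.1} {b}
      (by simp [Finset.disjoint_left, hne, i.2.2])
      (by simp) (by simp)
      (by
        intro u hu w hw
        simp at hu hw
        subst hw
        rcases hu with rfl | rfl
        · exact hab
        · exact fun h => hi h.symm)
    convert this using 1
    funext j
    have hja : j.1 ≠ a := j.2.1
    have hjb : j.1 ≠ b := j.2.2
    simp only [hE1def, Finset.mem_insert, Finset.mem_singleton, hja, hjb,
      false_or, if_false]
    simp [Subtype.ext_iff]
  have hE2 : ∀ i : {i : V // i ≠ a ∧ i ≠ b}, ¬ G.Adj a i.1 → E2 i ∈ S := by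
    intro i hi
    have := hmem {a} {b, i.1}
      (by simp [Finset.disjoint_left, hne, Ne.symm i.2.1])
      (by simp) (by simp)
      (by
        intro u hu w hw
        simp at hu hw
        subst hu
        rcases hw with rfl | rfl
        · exact hab
        · exact hi)
    convert this using 1
    funext j
    have hja : j.1 ≠ a := j.2.1
    have hjb : j.1 ≠ b := j.2.2
    simp only [hE2def, Finset.mem_insert, Finset.mem_singleton, hja, hjb,
      false_or, if_false]
    simp [Subtype.ext_iff]
  -- span S = ker φ
  have hker : Submodule.span ℝ S = LinearMap.ker φ := by
    apply le_antisymm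
    · rw [Submodule.span_le]
      rintro X ⟨A, B, C, hAB, hAC, hBC, hU, ha, hb, hedge, rfl⟩
      simp only [SetLike.mem_coe, LinearMap.mem_ker]
      apply Prod.ext
      · funext j
        have : (j.1 : V) ∉ A := fun h => hedge j.1 h b hb (G.adj_symm j.2)
        simp [φ, this]
      · funext j
        have : (j.1 : V) ∉ B := fun h => hedge a ha j.1 h j.2
        simp [φ, this]
    · intro x hx
      rw [LinearMap.mem_ker] at hx
      have hx1 : ∀ i : {i : V // i ≠ a ∧ i ≠ b}, G.Adj b i.1 → (x i).1 = 0 := by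
        intro i hi
        have := congrFun (congrArg Prod.fst hx) ⟨i.1, hi⟩
        simpa [φ] using this
      have hx2 : ∀ i : {i : V // i ≠ a ∧ i ≠ b}, G.Adj a i.1 → (x i).2 = 0 := by
        intro i hi
        have := congrFun (congrArg Prod.snd hx) ⟨i.1, hi⟩
        simpa [φ] using this
      have hdecomp : x = ∑ i : {i : V // i ≠ a ∧ i ≠ b},
          ((x i).1 • E1 i + (x i).2 • E2 i) := by
        funext j
        rw [Finset.sum_apply]
        apply Prod.ext
        · rw [Prod.fst_sum]
          simp [hE1def, hE2def, mul_ite, Finset.sum_ite_eq]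
        · rw [Prod.snd_sum]
          simp [hE1def, hE2def, mul_ite, Finset.sum_ite_eq]
      rw [hdecomp]
      apply Submodule.sum_mem
      intro i _
      apply Submodule.add_mem
      · by_cases h : G.Adj b i.1
        · rw [hx1 i h]; simp
        · exact Submodule.smul_mem _ _ (Submodule.subset_span (hE1 i h))
      · by_cases h : G.Adj a i.1
        · rw [hx2 i h]; simp
        · exact Submodule.smul_mem _ _ (Submodule.subset_span (hE2 i h))
  -- direction of the affine span
  have hdir : (affineSpan ℝ (convexHull ℝ S)).direction = Submodule.span ℝ S := by
    rw [affineSpan_convexHull, direction_affineSpan]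
    apply le_antisymm
    · rw [vectorSpan_def, Submodule.span_le]
      rintro x ⟨u, hu, v, hv, rfl⟩
      exact sub_mem (Submodule.subset_span hu) (Submodule.subset_span hv)
    · rw [Submodule.span_le]
      intro x hx
      have : x -ᵥ 0 ∈ vectorSpan ℝ S := vsub_mem_vectorSpan ℝ hx h0S
      simpa using this
  -- φ is surjective
  have hsurj : Function.Surjective φ := by
    intro y
    refine ⟨fun i =>
      ((if h : G.Adj b i.1 then y.1 ⟨i.1, h⟩ else 0),
       (if h : G.Adj a i.1 then y.2 ⟨i.1, h⟩ else 0)), ?_⟩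
    apply Prod.ext
    · funext j; simp [φ, j.2]
    · funext j; simp [φ, j.2]
  -- cardinalities
  have hcardI : Fintype.card {i : V // i ≠ a ∧ i ≠ b} = Fintype.card V - 2 := by
    rw [Fintype.card_subtype]
    have h : Finset.univ.filter (fun i => i ≠ a ∧ i ≠ b) = Finset.univ \ {a, b} := by
      ext i; simp [not_or]
    rw [h, Finset.card_sdiff_of_subset (Finset.subset_univ _), Finset.card_univ,
      Finset.card_pair hne]
  have hcarda : Fintype.card {j : V // G.Adj a j} = (G.neighborFinset a).card := by
    rw [Fintype.card_subtype]
    congr 1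
    ext j
    simp [SimpleGraph.mem_neighborFinset]
  have hcardb : Fintype.card {j : V // G.Adj b j} = (G.neighborFinset b).card := by
    rw [Fintype.card_subtype]
    congr 1
    ext j
    simp [SimpleGraph.mem_neighborFinset]
  -- rank-nullity
  have hrn := LinearMap.finrank_range_add_finrank_ker φ
  rw [LinearMap.range_eq_top.mpr hsurj, finrank_top] at hrn
  have hdom : Module.finrank ℝ ({i : V // i ≠ a ∧ i ≠ b} → ℝ × ℝ)
      = 2 * (Fintype.card V - 2) := by
    rw [Module.finrank_pi_fintype]
    simp [hcardI, mul_comm]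
  have hcod : Module.finrank ℝ
      (({j : V // G.Adj b j} → ℝ) × ({j : V // G.Adj a j} → ℝ))
      = (G.neighborFinset a).card + (G.neighborFinset b).card := by
    rw [Module.finrank_prod, Module.finrank_fintype_fun_eq_card,
      Module.finrank_fintype_fun_eq_card, hcarda, hcardb]
    ring
  rw [hdir, hker]
  rw [hdom, hcod] at hrn
  omega
end
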